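/- arXiv:2402.01160 — 2 statements merged into one kernel-verified Lean document; each statement's English description precedes it below -/
import Mathlib

section
/- Define f(α) = (27 d γ²/(N s²)) (1 - exp(-α/(3γ)))³ + (2 d γ²/N) exp(-α/γ) for α ≥ 0, where d, N, s, γ > 0. Then f attains its minimum over [0, ∞) uniquely at α* = 3γ ln(1 + √6 s / 9). -/
/-!
Substituting `t = exp (-α / (3γ)) ∈ (0, 1]` turns the objective into the cubic
`A (1 - t)³ + B t³` with `A, B > 0`. Its critical point `τ` satisfies `A (1 - τ)² = B τ²`, and
then `g t - g τ = (t - τ)² (A (3 - t - 2τ) + B (t + 2τ))`, whose second factor is positive on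
`[0, 1]`. For the given constants `A / B = 27 / (2 s²)`, so `τ = 1 / (1 + √6 s / 9)`.
-/

open Real

namespace ExpCubicLoss

noncomputable def loss (A B γ α : ℝ) : ℝ :=
  A * (1 - exp (-α / (3 * γ))) ^ 3 + B * exp (-α / γ)

section Cubic

variable {A B t τ : ℝ}

lemma cubic_sub_cubic_of_balance (hbal : A * (1 - τ) ^ 2 = B * τ ^ 2) :
    A * (1 - t) ^ 3 + B * t ^ 3 - (A * (1 - τ) ^ 3 + B * τ ^ 3)
      = (t - τ) ^ 2 * (A * (3 - t - 2 * τ) + B * (t + 2 * τ)) := by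
  linear_combination (3 * (τ - t)) * hbal

lemma cubic_factor_pos (hA : 0 < A) (hB : 0 < B) (ht : t ∈ Set.Icc (0 : ℝ) 1)
    (hτ : τ ∈ Set.Icc (0 : ℝ) 1) : 0 < A * (3 - t - 2 * τ) + B * (t + 2 * τ) := by
  obtain ⟨ht0, ht1⟩ := ht
  obtain ⟨hτ0, hτ1⟩ := hτ
  rcases (add_nonneg ht0 (by linarith : 0 ≤ 2 * τ)).eq_or_lt with hzero | hpos
  · nlinarith
  · nlinarith

lemma cubic_le_of_balance (hA : 0 < A) (hB : 0 < B) (ht : t ∈ Set.Icc (0 : ℝ) 1)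
    (hτ : τ ∈ Set.Icc (0 : ℝ) 1) (hbal : A * (1 - τ) ^ 2 = B * τ ^ 2) :
    A * (1 - τ) ^ 3 + B * τ ^ 3 ≤ A * (1 - t) ^ 3 + B * t ^ 3 := by
  have := cubic_sub_cubic_of_balance (t := t) hbal
  nlinarith [sq_nonneg (t - τ), cubic_factor_pos hA hB ht hτ]

lemma eq_of_cubic_eq_of_balance (hA : 0 < A) (hB : 0 < B) (ht : t ∈ Set.Icc (0 : ℝ) 1)
    (hτ : τ ∈ Set.Icc (0 : ℝ) 1) (hbal : A * (1 - τ) ^ 2 = B * τ ^ 2)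
    (heq : A * (1 - t) ^ 3 + B * t ^ 3 = A * (1 - τ) ^ 3 + B * τ ^ 3) : t = τ := by
  have hprod : (t - τ) ^ 2 * (A * (3 - t - 2 * τ) + B * (t + 2 * τ)) = 0 := by
    rw [← cubic_sub_cubic_of_balance hbal, heq, sub_self]
  have := (mul_eq_zero.1 hprod).resolve_right (cubic_factor_pos hA hB ht hτ).ne'
  exact sub_eq_zero.1 (pow_eq_zero_iff two_ne_zero |>.1 this)

end Cubic

lemma exp_neg_div_eq_cube (α γ : ℝ) : exp (-α / γ) = exp (-α / (3 * γ)) ^ 3 := by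
  rw [← exp_nat_mul]
  congr 1
  push_cast
  ring

lemma exp_neg_div_mem_Icc {α γ : ℝ} (hα : 0 ≤ α) (hγ : 0 < γ) :
    exp (-α / (3 * γ)) ∈ Set.Icc (0 : ℝ) 1 :=
  ⟨(exp_pos _).le,
    exp_le_one_iff.2 (div_nonpos_of_nonpos_of_nonneg (neg_nonpos.2 hα) (by positivity))⟩

lemma loss_eq_cubic (A B γ α : ℝ) :
    loss A B γ α = A * (1 - exp (-α / (3 * γ))) ^ 3 + B * exp (-α / (3 * γ)) ^ 3 := by
  rw [loss, exp_neg_div_eq_cube α γ]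

theorem loss_isUniqueMin_of_balance {A B γ α₀ β : ℝ} (hA : 0 < A) (hB : 0 < B) (hγ : 0 < γ)
    (hα₀ : 0 ≤ α₀) (hβ : 0 ≤ β)
    (hbal : A * (1 - exp (-α₀ / (3 * γ))) ^ 2 = B * exp (-α₀ / (3 * γ)) ^ 2) :
    loss A B γ α₀ ≤ loss A B γ β ∧ (loss A B γ β = loss A B γ α₀ → β = α₀) := by
  have hτ := exp_neg_div_mem_Icc hα₀ hγ
  have ht := exp_neg_div_mem_Icc hβ hγ
  rw [loss_eq_cubic, loss_eq_cubic]
  refine ⟨cubic_le_of_balance hA hB ht hτ hbal, fun heq => ?_⟩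
  have hexp := eq_of_cubic_eq_of_balance hA hB ht hτ hbal heq
  have hdiv : -β / (3 * γ) = -α₀ / (3 * γ) := exp_injective hexp
  rwa [div_left_inj' (by positivity), neg_inj] at hdiv

lemma exp_neg_log_div (c x : ℝ) (hc : c ≠ 0) (hx : 0 < x) :
    exp (-(c * log x) / c) = x⁻¹ := by
  rw [neg_div, mul_div_cancel_left₀ _ hc, exp_neg, exp_log hx]

end ExpCubicLoss

open ExpCubicLoss in
theorem optimal_alpha_unique_min (d N s γ : ℝ)
    (hd : 0 < d) (hN : 0 < N) (hs : 0 < s) (hγ : 0 < γ) :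
    ∀ β : ℝ, 0 ≤ β →
      (27 * d * γ ^ 2 / (N * s ^ 2))
          * (1 - Real.exp (-(3 * γ * Real.log (1 + Real.sqrt 6 * s / 9)) / (3 * γ))) ^ 3
        + (2 * d * γ ^ 2 / N)
          * Real.exp (-(3 * γ * Real.log (1 + Real.sqrt 6 * s / 9)) / γ)
      ≤ (27 * d * γ ^ 2 / (N * s ^ 2)) * (1 - Real.exp (-β / (3 * γ))) ^ 3
        + (2 * d * γ ^ 2 / N) * Real.exp (-β / γ)
    ∧ ((27 * d * γ ^ 2 / (N * s ^ 2)) * (1 - Real.exp (-β / (3 * γ))) ^ 3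
        + (2 * d * γ ^ 2 / N) * Real.exp (-β / γ)
      = (27 * d * γ ^ 2 / (N * s ^ 2))
          * (1 - Real.exp (-(3 * γ * Real.log (1 + Real.sqrt 6 * s / 9)) / (3 * γ))) ^ 3
        + (2 * d * γ ^ 2 / N)
          * Real.exp (-(3 * γ * Real.log (1 + Real.sqrt 6 * s / 9)) / γ)
      → β = 3 * γ * Real.log (1 + Real.sqrt 6 * s / 9)) := by
  intro β hβ
  set u := Real.sqrt 6 * s / 9 with hu
  have hu0 : 0 < u := by positivity
  have hτ : exp (-(3 * γ * log (1 + u)) / (3 * γ)) = (1 + u)⁻¹ :=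
    exp_neg_log_div _ _ (by positivity) (by positivity)
  have hbal : 27 * d * γ ^ 2 / (N * s ^ 2) * (1 - exp (-(3 * γ * log (1 + u)) / (3 * γ))) ^ 2
      = 2 * d * γ ^ 2 / N * exp (-(3 * γ * log (1 + u)) / (3 * γ)) ^ 2 := by
    have h6 : Real.sqrt 6 ^ 2 = 6 := sq_sqrt (by norm_num)
    rw [hτ, hu]
    field_simp
    linear_combination (27 * s ^ 2) * h6
  exact loss_isUniqueMin_of_balance (by positivity) (by positivity) hγ
    (by have := log_nonneg (by linarith : (1 : ℝ) ≤ 1 + u); positivity) hβ hbal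
end

section
/- With α* = 3γ ln(1 + √6 s/9), the minimal value of f(α) = (27 d γ²/(N s²))(1 - exp(-α/(3γ)))³ + (2 d γ²/N) exp(-α/γ) equals 27 d γ² / (N (s + 3√6/2)²). -/
/-!
Substituting `u = exp (-α / (3γ))` turns the error into `A (1 - u)³ + B u³` with
`A = 27 d γ² / (N s²)` and `B = 2 d γ² / N`. At `α*` we have `u = 1 / (1 + r)` with
`r = (1 - u) / u = √6 s / 9`, which satisfies the stationarity condition `A r² = B`; there the
value collapses to `B / (1 + r)²`, and `s + 3√6/2 = (3√6/2)(1 + r)` gives the stated form.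
-/

open Real

lemma exp_neg_mul_log_div_eq_inv_pow {c t : ℝ} (hc : c ≠ 0) (ht : 0 < t) (n : ℕ) :
    exp (-(n * c * log t) / c) = t⁻¹ ^ n := by
  have hlog : -(n * c * log t) / c = log (t⁻¹ ^ n) := by
    rw [log_pow, log_inv]
    field_simp
  rw [hlog, exp_log (by positivity)]

lemma cube_error_eq_of_balance {A B r : ℝ} (hr : 1 + r ≠ 0) (hbal : A * r ^ 2 = B) :
    A * (1 - (1 + r)⁻¹) ^ 3 + B * (1 + r)⁻¹ ^ 3 = B / (1 + r) ^ 2 := by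
  rw [← hbal]
  field_simp
  ring

theorem optimal_error_value_general (d N s γ : ℝ)
    (hs : 0 < s) (hγ : 0 < γ) :
    (27 * d * γ ^ 2 / (N * s ^ 2))
        * (1 - Real.exp (-(3 * γ * Real.log (1 + Real.sqrt 6 * s / 9)) / (3 * γ))) ^ 3
      + (2 * d * γ ^ 2 / N)
        * Real.exp (-(3 * γ * Real.log (1 + Real.sqrt 6 * s / 9)) / γ)
    = 27 * d * γ ^ 2 / (N * (s + 3 * Real.sqrt 6 / 2) ^ 2) := by
  set r := √6 * s / 9
  have hsqrt : √6 ^ 2 = 6 := sq_sqrt (by norm_num)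
  have ht : 0 < 1 + r := by positivity
  have hexp₁ : exp (-(3 * γ * log (1 + r)) / (3 * γ)) = (1 + r)⁻¹ := by
    simpa using exp_neg_mul_log_div_eq_inv_pow (c := 3 * γ) (by positivity) ht 1
  have hexp₃ : exp (-(3 * γ * log (1 + r)) / γ) = (1 + r)⁻¹ ^ 3 :=
    exp_neg_mul_log_div_eq_inv_pow hγ.ne' ht 3
  have hbal : 27 * d * γ ^ 2 / (N * s ^ 2) * r ^ 2 = 2 * d * γ ^ 2 / N := by
    simp only [r, div_pow, mul_pow, hsqrt]
    field_simp
    ring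
  have hshift : (s + 3 * √6 / 2) ^ 2 = 27 / 2 * (1 + r) ^ 2 := by
    linear_combination (9 / 4 - s ^ 2 / 6) * hsqrt
  rw [hexp₁, hexp₃, cube_error_eq_of_balance ht.ne' hbal, hshift]
  field_simp

theorem optimal_error_value (d N s γ : ℝ)
    (hd : 0 < d) (hN : 0 < N) (hs : 0 < s) (hγ : 0 < γ) :
    (27 * d * γ ^ 2 / (N * s ^ 2))
        * (1 - Real.exp (-(3 * γ * Real.log (1 + Real.sqrt 6 * s / 9)) / (3 * γ))) ^ 3
      + (2 * d * γ ^ 2 / N)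
        * Real.exp (-(3 * γ * Real.log (1 + Real.sqrt 6 * s / 9)) / γ)
    = 27 * d * γ ^ 2 / (N * (s + 3 * Real.sqrt 6 / 2) ^ 2) :=
  optimal_error_value_general d N s γ hs hγ
end
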